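/- In an SP-structure satisfying Symmetry, Non-negativity, Boundedness, O-Projection, and Factorization, the intersection of any two subspaces is a subspace. -/

import Mathlib

variable {Ω : Type*}

def IsOrtho (p : Ω → Ω → ℝ) (A : Set Ω) : Prop :=
  ∀ x ∈ A, ∀ y ∈ A, x ≠ y → p x y = 0

noncomputable def pSet (p : Ω → Ω → ℝ) (x : Ω) (A : Set Ω) : ℝ :=
  ∑' a : A, p x a

def Symm (p : Ω → Ω → ℝ) : Prop := ∀ x y, p x y = p y x

def Nonneg (p : Ω → Ω → ℝ) : Prop := ∀ x y, 0 ≤ p x y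

def Bounded (p : Ω → Ω → ℝ) : Prop :=
  ∀ (x : Ω) (A : Set Ω), IsOrtho p A →
    Summable (fun a : A => p x a) ∧ pSet p x A ≤ 1

def OProj (p : Ω → Ω → ℝ) : Prop :=
  ∀ (x : Ω) (A : Set Ω), IsOrtho p A → pSet p x A < 1 →
    ∃ y, pSet p y A = 0 ∧ pSet p x A + p x y = 1

def Factor (p : Ω → Ω → ℝ) : Prop :=
  ∀ (x y z : Ω) (A : Set Ω), IsOrtho p A → pSet p y A = 1 → pSet p z A = 1 →
    p x y = pSet p x A → p x z = p x y * p y z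

def Subgen (p : Ω → Ω → ℝ) (A : Set Ω) : Set Ω := {x | pSet p x A = 1}

def IsSubspace (p : Ω → Ω → ℝ) (X : Set Ω) : Prop :=
  ∃ A, IsOrtho p A ∧ X = Subgen p A

def Standard (p : Ω → Ω → ℝ) : Prop := ∀ x y, p x y = 1 → x = y


/-!
Writing `S⊥ = {w | ∀ s ∈ S, p w s = 0}`, O-Projection makes every subspace a double
orthocomplement, `Ā = A⊥⊥`. Hence `Ā ∩ B̄ = (A⊥ ∪ B⊥)⊥`, and it suffices to show that every
orthocomplement `S⊥` is a subspace. Take a maximal ortho-set `C ⊆ S⊥` (Zorn). If some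
`x ∈ S⊥` had `p(x, C) < 1`, its O-projection `y` onto `C⊥` would lie in `S⊥` by Factorization,
contradicting maximality; so `S⊥ ⊆ C̄ = C⊥⊥ ⊆ S⊥⊥⊥ = S⊥`.
-/

section SPStructure

variable {p : Ω → Ω → ℝ}

def orth (p : Ω → Ω → ℝ) (S : Set Ω) : Set Ω := {w | ∀ s ∈ S, p w s = 0}

lemma orth_antitone {S T : Set Ω} (h : S ⊆ T) : orth p T ⊆ orth p S :=
  fun _ hw s hs => hw s (h hs)

lemma subset_orth_orth (h1 : Symm p) (S : Set Ω) : S ⊆ orth p (orth p S) :=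
  fun s hs w hw => (h1 s w).trans (hw s hs)

lemma orth_orth_orth (h1 : Symm p) (S : Set Ω) : orth p (orth p (orth p S)) = orth p S :=
  (orth_antitone (subset_orth_orth h1 S)).antisymm (subset_orth_orth h1 (orth p S))

lemma orth_union (S T : Set Ω) : orth p (S ∪ T) = orth p S ∩ orth p T := by
  ext w
  simp [orth, or_imp, forall_and]

lemma IsOrtho.insert (h1 : Symm p) {A : Set Ω} (hA : IsOrtho p A) {y : Ω} (hy : y ∈ orth p A) :
    IsOrtho p (insert y A) :=
  Set.Pairwise.insert hA fun a ha _ => ⟨hy a ha, (h1 a y).trans (hy a ha)⟩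

lemma isOrtho_singleton (x : Ω) : IsOrtho p {x} :=
  Set.pairwise_singleton x _

lemma pSet_singleton (x a : Ω) : pSet p x {a} = p x a :=
  tsum_singleton a (p x)

lemma pSet_insert (h3 : Bounded p) {A : Set Ω} (hA : IsOrtho p A) {y : Ω} (hy : y ∉ A) (x : Ω) :
    pSet p x (insert y A) = p x y + pSet p x A := by
  rw [pSet, Set.insert_eq, Summable.tsum_union_disjoint (Set.disjoint_singleton_left.mpr hy)
    .of_finite (h3 x A hA).1, tsum_singleton y (p x), pSet]

lemma pSet_eq_zero_iff (h2 : Nonneg p) (h3 : Bounded p) {A : Set Ω} (hA : IsOrtho p A) (x : Ω) :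
    pSet p x A = 0 ↔ x ∈ orth p A := by
  rw [pSet, ← (h3 x A hA).1.hasSum_iff,
    hasSum_zero_iff_of_nonneg (f := fun a : A => p x a) fun a => h2 x a, funext_iff, Subtype.forall]
  rfl

lemma p_self_eq_one (h1 : Symm p) (h3 : Bounded p) (h4 : OProj p) (x : Ω) : p x x = 1 := by
  have hle : p x x ≤ 1 := pSet_singleton (p := p) x x ▸ (h3 x _ (isOrtho_singleton x)).2
  by_contra hne
  obtain ⟨z, hz0, hz1⟩ :=
    h4 x _ (isOrtho_singleton x) (pSet_singleton (p := p) x x ▸ hle.lt_of_ne hne)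
  rw [pSet_singleton] at hz0 hz1
  rw [h1 x z, hz0] at hz1
  exact hne (by linarith)

lemma notMem_of_mem_orth (h1 : Symm p) (h3 : Bounded p) (h4 : OProj p) {A : Set Ω} {y : Ω}
    (hy : y ∈ orth p A) : y ∉ A := fun hyA => by
  simpa [p_self_eq_one h1 h3 h4 y] using hy y hyA

lemma exists_orth_of_pSet_ne_one (h2 : Nonneg p) (h3 : Bounded p) (h4 : OProj p) {A : Set Ω}
    (hA : IsOrtho p A) {x : Ω} (hx : pSet p x A ≠ 1) :
    ∃ y ∈ orth p A, 0 < p x y ∧ pSet p x A + p x y = 1 := by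
  have hlt : pSet p x A < 1 := (h3 x A hA).2.lt_of_ne hx
  obtain ⟨y, hy0, hy1⟩ := h4 x A hA hlt
  exact ⟨y, (pSet_eq_zero_iff h2 h3 hA y).1 hy0, by linarith, hy1⟩

lemma subgen_eq_orth_orth (h1 : Symm p) (h2 : Nonneg p) (h3 : Bounded p) (h4 : OProj p)
    {A : Set Ω} (hA : IsOrtho p A) : Subgen p A = orth p (orth p A) := by
  ext x
  constructor
  · intro (hx : pSet p x A = 1) w hw
    have hle := (h3 x _ (hA.insert h1 hw)).2
    rw [pSet_insert h3 hA (notMem_of_mem_orth h1 h3 h4 hw), hx] at hle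
    linarith [h2 x w]
  · intro hx
    by_contra hne
    obtain ⟨y, hy, hxy, -⟩ := exists_orth_of_pSet_ne_one h2 h3 h4 hA hne
    exact hxy.ne' (hx y hy)

lemma mem_orth_of_oProjection (h1 : Symm p) (h2 : Nonneg p) (h3 : Bounded p) (h4 : OProj p)
    (h5 : Factor p) {S C : Set Ω} (hC : IsOrtho p C) (hCS : C ⊆ orth p S) {x y : Ω}
    (hx : x ∈ orth p S) (hy : y ∈ orth p C) (hxy : 0 < p x y) (hxC : pSet p x C + p x y = 1) :
    y ∈ orth p S := by
  have hyC := notMem_of_mem_orth h1 h3 h4 hy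
  intro s hs
  have hsC : pSet p s C = 0 :=
    (pSet_eq_zero_iff h2 h3 hC s).2 fun c hc => (h1 s c).trans (hCS hc s hs)
  -- Factorization through the ortho-set `insert y C` gives `0 = p s x = p s y * p y x`.
  have hfactor := h5 s y x (insert y C) (hC.insert h1 hy)
    (by rw [pSet_insert h3 hC hyC, p_self_eq_one h1 h3 h4, (pSet_eq_zero_iff h2 h3 hC y).2 hy,
      add_zero])
    (by rw [pSet_insert h3 hC hyC]; linarith)
    (by rw [pSet_insert h3 hC hyC, hsC, add_zero])
  rw [(h1 s x).trans (hx s hs), h1 y x] at hfactor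
  rw [h1 y s]
  simpa [hxy.ne'] using hfactor

lemma exists_maximal_isOrtho_subset (S : Set Ω) :
    ∃ C, Maximal (fun C => C ⊆ S ∧ IsOrtho p C) C :=
  zorn_subset _ fun c hc hchain =>
    ⟨⋃₀ c, ⟨Set.sUnion_subset fun _ ht => (hc ht).1,
      (Set.pairwise_sUnion hchain.directedOn).2 fun _ ht => (hc ht).2⟩,
      fun _ => Set.subset_sUnion_of_mem⟩

lemma isSubspace_orth (h1 : Symm p) (h2 : Nonneg p) (h3 : Bounded p) (h4 : OProj p)
    (h5 : Factor p) (S : Set Ω) : IsSubspace p (orth p S) := by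
  obtain ⟨C, ⟨hCS, hC⟩, hmax⟩ := exists_maximal_isOrtho_subset (p := p) (orth p S)
  refine ⟨C, hC, (Set.Subset.antisymm ?_ ?_)⟩
  · intro x hx
    by_contra (hne : pSet p x C ≠ 1)
    obtain ⟨y, hy, hxy, hxC⟩ := exists_orth_of_pSet_ne_one h2 h3 h4 hC hne
    have hyS := mem_orth_of_oProjection h1 h2 h3 h4 h5 hC hCS hx hy hxy hxC
    have hyC : insert y C ⊆ C :=
      hmax ⟨Set.insert_subset hyS hCS, hC.insert h1 hy⟩ (Set.subset_insert y C)
    exact notMem_of_mem_orth h1 h3 h4 hy (hyC (Set.mem_insert y C))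
  · rw [subgen_eq_orth_orth h1 h2 h3 h4 hC, ← orth_orth_orth h1 S]
    exact orth_antitone (orth_antitone hCS)

end SPStructure

theorem stmt12 (p : Ω → Ω → ℝ) (h1 : Symm p) (h2 : Nonneg p) (h3 : Bounded p)
    (h4 : OProj p) (h5 : Factor p) (X Y : Set Ω)
    (hX : IsSubspace p X) (hY : IsSubspace p Y) :
    IsSubspace p (X ∩ Y) := by
  obtain ⟨A, hA, rfl⟩ := hX
  obtain ⟨B, hB, rfl⟩ := hY
  rw [subgen_eq_orth_orth h1 h2 h3 h4 hA, subgen_eq_orth_orth h1 h2 h3 h4 hB, ← orth_union]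
  exact isSubspace_orth h1 h2 h3 h4 h5 _
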